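/- For a three-qubit pure state |ψ⟩ = α₀|000⟩ + α₁e^{iθ}|100⟩ + α₂|101⟩ + α₃|110⟩ + α₄|111⟩ with α₀,…,α₄ ≥ 0, Σᵢ αᵢ² = 1 and θ ∈ [0,π], the following identities hold for the squared steering observables and squared partial tangles of the two-qubit reduced states: S₁₂² − S₁₃² = 3(τ₁₂² − τ₁₃²) = 12α₀²(α₃² − α₂²), S₁₂² − S₂₃² = 3(τ₁₂² − τ₂₃²), and S₁₃² − S₂₃² = 3(τ₁₃² − τ₂₃²). -/

import Mathlib

/-- Squared steering observable S₁₂² of the reduced state ρ₁₂ of the three-qubit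
pure state α₀|000⟩ + α₁e^{iθ}|100⟩ + α₂|101⟩ + α₃|110⟩ + α₄|111⟩. -/
noncomputable def S12sq (a0 a1 a2 a3 a4 θ : ℝ) : ℝ :=
  1 + 8 * a0 ^ 2 * a3 ^ 2 - 4 * a0 ^ 2 * a2 ^ 2 - 4 * a1 ^ 2 * a4 ^ 2
    - 4 * a2 ^ 2 * a3 ^ 2 + 8 * a1 * a2 * a3 * a4 * Real.cos θ

/-- Squared steering observable S₁₃² of the reduced state ρ₁₃. -/
noncomputable def S13sq (a0 a1 a2 a3 a4 θ : ℝ) : ℝ :=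
  1 + 8 * a0 ^ 2 * a2 ^ 2 - 4 * a0 ^ 2 * a3 ^ 2 - 4 * a1 ^ 2 * a4 ^ 2
    - 4 * a2 ^ 2 * a3 ^ 2 + 8 * a1 * a2 * a3 * a4 * Real.cos θ

/-- Squared steering observable S₂₃² of the reduced state ρ₂₃. -/
noncomputable def S23sq (a0 a1 a2 a3 a4 θ : ℝ) : ℝ :=
  1 - 4 * a0 ^ 2 * a2 ^ 2 - 4 * a0 ^ 2 * a3 ^ 2 + 8 * a1 ^ 2 * a4 ^ 2
    + 8 * a2 ^ 2 * a3 ^ 2 - 16 * a1 * a2 * a3 * a4 * Real.cos θ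

/-- Partial tangle τ₁₂ = 2α₀√(α₃²+α₄²). -/
noncomputable def tau12 (a0 a1 a2 a3 a4 θ : ℝ) : ℝ :=
  2 * a0 * Real.sqrt (a3 ^ 2 + a4 ^ 2)

/-- Partial tangle τ₁₃ = 2α₀√(α₂²+α₄²). -/
noncomputable def tau13 (a0 a1 a2 a3 a4 θ : ℝ) : ℝ :=
  2 * a0 * Real.sqrt (a2 ^ 2 + a4 ^ 2)

/-- Partial tangle τ₂₃ = 2√(α₀²α₄²+α₁²α₄²+α₂²α₃²−2α₁α₂α₃α₄cosθ). -/
noncomputable def tau23 (a0 a1 a2 a3 a4 θ : ℝ) : ℝ :=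
  2 * Real.sqrt (a0 ^ 2 * a4 ^ 2 + a1 ^ 2 * a4 ^ 2 + a2 ^ 2 * a3 ^ 2
    - 2 * a1 * a2 * a3 * a4 * Real.cos θ)

/-- Average teleportation fidelity f(ρ₁₂), determined by τ₁₂ = 3f(ρ₁₂) − 2. -/
noncomputable def fid12 (a0 a1 a2 a3 a4 θ : ℝ) : ℝ := (tau12 a0 a1 a2 a3 a4 θ + 2) / 3

/-- Average teleportation fidelity f(ρ₁₃), determined by τ₁₃ = 3f(ρ₁₃) − 2. -/
noncomputable def fid13 (a0 a1 a2 a3 a4 θ : ℝ) : ℝ := (tau13 a0 a1 a2 a3 a4 θ + 2) / 3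

/-- Average teleportation fidelity f(ρ₂₃), determined by τ₂₃ = 3f(ρ₂₃) − 2. -/
noncomputable def fid23 (a0 a1 a2 a3 a4 θ : ℝ) : ℝ := (tau23 a0 a1 a2 a3 a4 θ + 2) / 3

/-! The radicand of τ₂₃ is (α₀α₄)² + x² + y² − 2xy cos θ with x = α₁α₄, y = α₂α₃, nonnegative by
the law of cosines. So every squared tangle is a polynomial in the αᵢ and cos θ, and the
identities reduce to polynomial identities. -/

theorem two_mul_mul_cos_le_sq_add_sq (x y θ : ℝ) : 2 * x * y * Real.cos θ ≤ x ^ 2 + y ^ 2 := by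
  have hdecomp : x ^ 2 + y ^ 2 - 2 * x * y * Real.cos θ
      = (x - Real.cos θ * y) ^ 2 + (y * Real.sin θ) ^ 2 := by
    linear_combination (-y ^ 2) * Real.sin_sq_add_cos_sq θ
  rw [← sub_nonneg, hdecomp]
  positivity

section

variable (a0 a1 a2 a3 a4 θ : ℝ)

theorem tau12_sq : tau12 a0 a1 a2 a3 a4 θ ^ 2 = 4 * a0 ^ 2 * (a3 ^ 2 + a4 ^ 2) := by
  rw [tau12, mul_pow, Real.sq_sqrt (by positivity)]
  ring

theorem tau13_sq : tau13 a0 a1 a2 a3 a4 θ ^ 2 = 4 * a0 ^ 2 * (a2 ^ 2 + a4 ^ 2) := by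
  rw [tau13, mul_pow, Real.sq_sqrt (by positivity)]
  ring

theorem tau23_sq : tau23 a0 a1 a2 a3 a4 θ ^ 2
    = 4 * (a0 ^ 2 * a4 ^ 2 + a1 ^ 2 * a4 ^ 2 + a2 ^ 2 * a3 ^ 2
      - 2 * a1 * a2 * a3 * a4 * Real.cos θ) := by
  have hcos := two_mul_mul_cos_le_sq_add_sq (a1 * a4) (a2 * a3) θ
  rw [tau23, mul_pow, Real.sq_sqrt (by nlinarith [sq_nonneg (a0 * a4)])]
  ring

theorem S12sq_sub_S13sq :
    S12sq a0 a1 a2 a3 a4 θ - S13sq a0 a1 a2 a3 a4 θ = 12 * a0 ^ 2 * (a3 ^ 2 - a2 ^ 2) := by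
  rw [S12sq, S13sq]
  ring

end

theorem stmt12_general (a0 a1 a2 a3 a4 θ : ℝ) :
    S12sq a0 a1 a2 a3 a4 θ - S13sq a0 a1 a2 a3 a4 θ
        = 3 * (tau12 a0 a1 a2 a3 a4 θ ^ 2 - tau13 a0 a1 a2 a3 a4 θ ^ 2) ∧
    S12sq a0 a1 a2 a3 a4 θ - S13sq a0 a1 a2 a3 a4 θ
        = 12 * a0 ^ 2 * (a3 ^ 2 - a2 ^ 2) ∧
    S12sq a0 a1 a2 a3 a4 θ - S23sq a0 a1 a2 a3 a4 θ
        = 3 * (tau12 a0 a1 a2 a3 a4 θ ^ 2 - tau23 a0 a1 a2 a3 a4 θ ^ 2) ∧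
    S13sq a0 a1 a2 a3 a4 θ - S23sq a0 a1 a2 a3 a4 θ
        = 3 * (tau13 a0 a1 a2 a3 a4 θ ^ 2 - tau23 a0 a1 a2 a3 a4 θ ^ 2) := by
  rw [tau12_sq, tau13_sq, tau23_sq, S12sq_sub_S13sq]
  refine ⟨by ring, rfl, ?_, ?_⟩ <;> simp only [S12sq, S13sq, S23sq] <;> ring

/-- For a three-qubit pure state α₀|000⟩ + α₁e^{iθ}|100⟩ + α₂|101⟩ + α₃|110⟩ + α₄|111⟩
(αᵢ ≥ 0, Σαᵢ² = 1, θ ∈ [0,π]): S₁₂² − S₁₃² = 3(τ₁₂² − τ₁₃²) = 12α₀²(α₃² − α₂²),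
S₁₂² − S₂₃² = 3(τ₁₂² − τ₂₃²), and S₁₃² − S₂₃² = 3(τ₁₃² − τ₂₃²). -/
theorem stmt12 (a0 a1 a2 a3 a4 θ : ℝ)
    (h0 : 0 ≤ a0) (h1 : 0 ≤ a1) (h2 : 0 ≤ a2) (h3 : 0 ≤ a3) (h4 : 0 ≤ a4)
    (hsum : a0 ^ 2 + a1 ^ 2 + a2 ^ 2 + a3 ^ 2 + a4 ^ 2 = 1)
    (hθ : θ ∈ Set.Icc 0 Real.pi) :
    S12sq a0 a1 a2 a3 a4 θ - S13sq a0 a1 a2 a3 a4 θ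
        = 3 * (tau12 a0 a1 a2 a3 a4 θ ^ 2 - tau13 a0 a1 a2 a3 a4 θ ^ 2) ∧
    S12sq a0 a1 a2 a3 a4 θ - S13sq a0 a1 a2 a3 a4 θ
        = 12 * a0 ^ 2 * (a3 ^ 2 - a2 ^ 2) ∧
    S12sq a0 a1 a2 a3 a4 θ - S23sq a0 a1 a2 a3 a4 θ
        = 3 * (tau12 a0 a1 a2 a3 a4 θ ^ 2 - tau23 a0 a1 a2 a3 a4 θ ^ 2) ∧
    S13sq a0 a1 a2 a3 a4 θ - S23sq a0 a1 a2 a3 a4 θ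
        = 3 * (tau13 a0 a1 a2 a3 a4 θ ^ 2 - tau23 a0 a1 a2 a3 a4 θ ^ 2) :=
  stmt12_general a0 a1 a2 a3 a4 θ
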